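/- arXiv:1304.3150 — 2 statements merged into one kernel-verified Lean document; each statement's English description precedes it below -/
import Mathlib

section
/- Let H be a complex Hilbert space and let S be a positive invertible bounded self-adjoint operator on H. Then for every ω ∈ H, 4 ∫₀^∞ y · ‖S (exp(−y·S) ω)‖² dy = ‖ω‖², where exp(−y·S) denotes the operator exponential and the integral is a Lebesgue integral over y ∈ (0, ∞). -/
/-!
The orbit `u y = exp (-y S) ω` solves `u' = -S u`. Along it, the symmetry of `S` makes
`E y = 2 y ⟪S u, u⟫ + ‖u‖²` have derivative `-4 y ‖S u‖²`, and `E 0 = ‖ω‖²`.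
Since `S` is strictly positive it is bounded below by some `c > 0`, so Grönwall's inequality gives
`‖u y‖² ≤ exp (-2 c y) ‖ω‖²` and hence `E y → 0` at infinity. The identity is then the fundamental
theorem of calculus for `E` on `(0, ∞)`; the nonnegative integrand is integrable because `E` has a
limit.
-/

open MeasureTheory Filter Topology NormedSpace RCLike
open scoped InnerProductSpace

theorem hasDerivAt_exp_smul_apply {E : Type*} [NormedAddCommGroup E] [NormedSpace ℂ E]
    [CompleteSpace E] (A : E →L[ℂ] E) (x : E) (t : ℝ) :
    HasDerivAt (fun t : ℝ => exp (t • A) x) (A (exp (t • A) x)) t :=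
  ((ContinuousLinearMap.apply ℂ E x).restrictScalars ℝ).hasFDerivAt.comp_hasDerivAt t
    (hasDerivAt_exp_smul_const' A t)

namespace LittlewoodPaley

variable {H : Type*} [NormedAddCommGroup H] [InnerProductSpace ℂ H]

theorem _root_.HasDerivAt.re_inner {f g : ℝ → H} {f' g' : H} {x : ℝ} (hf : HasDerivAt f f' x)
    (hg : HasDerivAt g g' x) :
    HasDerivAt (fun t => re ⟪f t, g t⟫_ℂ) (re ⟪f x, g'⟫_ℂ + re ⟪f', g x⟫_ℂ) x :=
  (reCLM (K := ℂ)).hasFDerivAt.comp_hasDerivAt x (hf.inner ℂ hg)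

theorem exists_pos_mul_norm_sq_le_re_inner [CompleteSpace H] {S : H →L[ℂ] H} (hS : 0 ≤ S)
    (hS' : IsUnit S) : ∃ c > 0, ∀ x, c * ‖x‖ ^ 2 ≤ re ⟪S x, x⟫_ℂ := by
  rcases subsingleton_or_nontrivial H with hH | hH
  · exact ⟨1, one_pos, fun x => by simp [Subsingleton.elim x 0]⟩
  obtain ⟨c, hc, hcS⟩ : ∃ c > 0, algebraMap ℝ (H →L[ℂ] H) c ≤ S :=
    (CFC.exists_pos_algebraMap_le_iff hS.isSelfAdjoint).2 fun x hx =>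
      (hS'.isStrictlyPositive hS).spectrum_pos hx
  refine ⟨c, hc, fun x => ?_⟩
  have := ((ContinuousLinearMap.le_def _ _).1 hcS).re_inner_nonneg_left x
  rwa [sub_apply, inner_sub_left, map_sub, sub_nonneg, Algebra.algebraMap_eq_smul_one,
    smul_apply, one_apply_eq_self, real_smul_eq_coe_smul (K := ℂ), inner_smul_real_left,
    RCLike.smul_re, inner_self_eq_norm_sq] at this

variable {S : H →L[ℂ] H} {u : ℝ → H}

theorem hasDerivAt_norm_sq {y : ℝ} (hu : HasDerivAt u (-S (u y)) y) :
    HasDerivAt (fun t => ‖u t‖ ^ 2) (-(2 * re ⟪S (u y), u y⟫_ℂ)) y := by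
  have h := hu.re_inner hu
  simp only [inner_self_eq_norm_sq, inner_neg_left, inner_neg_right, map_neg] at h
  refine h.congr_deriv ?_
  rw [inner_re_symm]
  ring

theorem hasDerivAt_re_inner (hS : (S : H →ₗ[ℂ] H).IsSymmetric) {y : ℝ}
    (hu : HasDerivAt u (-S (u y)) y) :
    HasDerivAt (fun t => re ⟪S (u t), u t⟫_ℂ) (-(2 * ‖S (u y)‖ ^ 2)) y := by
  have h := ((S.restrictScalars ℝ).hasFDerivAt.comp_hasDerivAt y hu).re_inner hu
  simp only [ContinuousLinearMap.coe_restrictScalars', Function.comp_def, map_neg,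
    inner_neg_left, inner_neg_right] at h
  refine h.congr_deriv ?_
  have hsymm : ⟪S (S (u y)), u y⟫_ℂ = ⟪S (u y), S (u y)⟫_ℂ := hS (S (u y)) (u y)
  rw [hsymm, inner_self_eq_norm_sq]
  ring

noncomputable def energy (S : H →L[ℂ] H) (u : ℝ → H) (t : ℝ) : ℝ :=
  2 * t * re ⟪S (u t), u t⟫_ℂ + ‖u t‖ ^ 2

theorem hasDerivAt_energy (hS : (S : H →ₗ[ℂ] H).IsSymmetric)
    (hu : ∀ y, HasDerivAt u (-S (u y)) y) (y : ℝ) :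
    HasDerivAt (energy S u) (-(4 * y * ‖S (u y)‖ ^ 2)) y := by
  refine ((((hasDerivAt_id' y).const_mul 2).mul (hasDerivAt_re_inner hS (hu y))).add
    (hasDerivAt_norm_sq (hu y))).congr_deriv ?_
  ring

theorem norm_sq_le_mul_exp {c : ℝ} (hc : ∀ x, c * ‖x‖ ^ 2 ≤ re ⟪S x, x⟫_ℂ)
    (hu : ∀ y, HasDerivAt u (-S (u y)) y) {y : ℝ} (hy : 0 ≤ y) :
    ‖u y‖ ^ 2 ≤ ‖u 0‖ ^ 2 * Real.exp (-2 * c * y) := by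
  have hcont : Continuous fun t => ‖u t‖ ^ 2 :=
    continuous_iff_continuousAt.2 fun t => (hasDerivAt_norm_sq (hu t)).continuousAt
  have := le_gronwallBound_of_liminf_deriv_right_le (K := -2 * c) (ε := 0) hcont.continuousOn
    (fun t _ r hr => (hasDerivAt_norm_sq (hu t)).hasDerivWithinAt.liminf_right_slope_le hr)
    le_rfl (fun t _ => by linarith [hc (u t)]) y ⟨hy, le_rfl⟩
  rwa [gronwallBound_ε0, sub_zero] at this

theorem tendsto_rpow_mul_norm_sq_atTop {c : ℝ} (hc0 : 0 < c)
    (hc : ∀ x, c * ‖x‖ ^ 2 ≤ re ⟪S x, x⟫_ℂ) (hu : ∀ y, HasDerivAt u (-S (u y)) y) (s : ℝ) :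
    Tendsto (fun y => y ^ s * ‖u y‖ ^ 2) atTop (𝓝 0) := by
  have hlim := (tendsto_rpow_mul_exp_neg_mul_atTop_nhds_zero s (2 * c) (by positivity)).const_mul
    (‖u 0‖ ^ 2)
  rw [mul_zero] at hlim
  refine squeeze_zero' ?_ ?_ hlim
  · filter_upwards [eventually_ge_atTop 0] with y hy
    exact mul_nonneg (Real.rpow_nonneg hy s) (sq_nonneg _)
  · filter_upwards [eventually_ge_atTop 0] with y hy
    calc y ^ s * ‖u y‖ ^ 2 ≤ y ^ s * (‖u 0‖ ^ 2 * Real.exp (-2 * c * y)) :=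
          mul_le_mul_of_nonneg_left (norm_sq_le_mul_exp hc hu hy) (Real.rpow_nonneg hy s)
      _ = ‖u 0‖ ^ 2 * (y ^ s * Real.exp (-(2 * c) * y)) := by ring_nf

theorem abs_re_inner_le_opNorm_mul_norm_sq (x : H) : |re ⟪S x, x⟫_ℂ| ≤ ‖S‖ * ‖x‖ ^ 2 :=
  calc |re ⟪S x, x⟫_ℂ| ≤ ‖S x‖ * ‖x‖ := (abs_re_le_norm _).trans (norm_inner_le_norm _ _)
    _ ≤ ‖S‖ * ‖x‖ * ‖x‖ := by gcongr; exact S.le_opNorm x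
    _ = ‖S‖ * ‖x‖ ^ 2 := by ring

theorem tendsto_energy_atTop {c : ℝ} (hc0 : 0 < c)
    (hc : ∀ x, c * ‖x‖ ^ 2 ≤ re ⟪S x, x⟫_ℂ) (hu : ∀ y, HasDerivAt u (-S (u y)) y) :
    Tendsto (energy S u) atTop (𝓝 0) := by
  have h0 := tendsto_rpow_mul_norm_sq_atTop hc0 hc hu 0
  have h1 := tendsto_rpow_mul_norm_sq_atTop hc0 hc hu 1
  simp only [Real.rpow_zero, one_mul, Real.rpow_one] at h0 h1
  have hq : Tendsto (fun y => 2 * y * re ⟪S (u y), u y⟫_ℂ) atTop (𝓝 0) := by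
    refine squeeze_zero_norm' ?_ (by simpa using h1.const_mul (2 * ‖S‖))
    filter_upwards [eventually_ge_atTop 0] with y hy
    rw [Real.norm_eq_abs, abs_mul, abs_mul, abs_two, abs_of_nonneg hy]
    calc 2 * y * |re ⟪S (u y), u y⟫_ℂ| ≤ 2 * y * (‖S‖ * ‖u y‖ ^ 2) := by
          gcongr; exact abs_re_inner_le_opNorm_mul_norm_sq (u y)
      _ = 2 * ‖S‖ * (y * ‖u y‖ ^ 2) := by ring
  rw [← add_zero (0 : ℝ)]
  exact hq.add h0

end LittlewoodPaley

open LittlewoodPaley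

/-- Littlewood–Paley identity: for a positive invertible bounded self-adjoint operator `S` on a
complex Hilbert space and any `ω`, `4 ∫₀^∞ y ‖S e^{-yS} ω‖² dy = ‖ω‖²`. -/
theorem littlewood_paley_identity
    {H : Type*} [NormedAddCommGroup H] [InnerProductSpace ℂ H] [CompleteSpace H]
    (S : H →L[ℂ] H) (hS : 0 ≤ S) (hS' : IsUnit S) (ω : H) :
    4 * ∫ y in Set.Ioi (0 : ℝ), y * ‖S (NormedSpace.exp ((-y) • S) ω)‖ ^ 2 = ‖ω‖ ^ 2 := by
  obtain ⟨c, hc0, hc⟩ := exists_pos_mul_norm_sq_le_re_inner hS hS'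
  have hsymm : (S : H →ₗ[ℂ] H).IsSymmetric :=
    ContinuousLinearMap.isSelfAdjoint_iff_isSymmetric.1 (IsSelfAdjoint.of_nonneg hS)
  set u : ℝ → H := fun y => exp (y • -S) ω
  have hu : ∀ y, HasDerivAt u (-S (u y)) y := hasDerivAt_exp_smul_apply (-S) ω
  have hFTC := integral_Ioi_of_hasDerivAt_of_nonpos' (fun y _ => hasDerivAt_energy hsymm hu y)
    (fun y (hy : 0 < y) => neg_nonpos.2 (by positivity)) (tendsto_energy_atTop hc0 hc hu)
  rw [← integral_const_mul]
  simpa [energy, u, integral_neg, mul_assoc] using hFTC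
end

section
/- Let H be a complex Hilbert space and let S be a positive invertible bounded self-adjoint operator on H. Then for all ω, η ∈ H, lim_{y → ∞} 4 ∫₀^∞ min(y, z) · ⟨S (exp(−z·S) ω), S (exp(−z·S) η)⟩ dz = ⟨ω, η⟩, where exp(−z·S) denotes the operator exponential and the integral is a Lebesgue integral over z ∈ (0, ∞). -/
/-!
Put `φ(z) = ⟪e^{-zS} ω, e^{-zS} η⟫`. Self-adjointness of `S` gives
`φ' = -2 ⟪S e^{-zS} ω, e^{-zS} η⟫` and `φ'' = 4 ⟪S e^{-zS} ω, S e^{-zS} η⟫`. Since `min y ·` is the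
Green function of `-d²/dz²` on `(0, ∞)` (Dirichlet at `0`, Neumann at `∞`), integrating by parts
twice turns `4 ∫₀^∞ min(y, z) ⟪S e^{-zS} ω, S e^{-zS} η⟫ dz` into `φ 0 - φ y`. Invertibility and
positivity put the spectrum of `S` in `[r, ∞)` for some `r > 0`, so `‖e^{-zS}‖ ≤ e^{-rz}`: this
makes the integrals converge and `φ y → 0`.
-/

open NormedSpace MeasureTheory Set Filter Asymptotics Topology
open scoped InnerProductSpace

theorem IsStrictlyPositive.exists_pos_le_of_mem_spectrum {A : Type*} [CStarAlgebra A]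
    [PartialOrder A] [StarOrderedRing A] {a : A} (ha : IsStrictlyPositive a) :
    ∃ r > 0, ∀ t ∈ spectrum ℝ a, r ≤ t := by
  rcases subsingleton_or_nontrivial A with hA | hA
  · exact ⟨1, one_pos, by simp [spectrum.of_subsingleton]⟩
  · obtain ⟨r, hr, hle⟩ := (CFC.exists_pos_algebraMap_le_iff ha.isSelfAdjoint).2
      fun t ht => ha.spectrum_pos ht
    exact ⟨r, hr, (algebraMap_le_iff_le_spectrum ha.isSelfAdjoint).1 hle⟩

theorem IsSelfAdjoint.norm_exp_neg_smul_le {A : Type*} [CStarAlgebra A] {a : A}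
    (ha : IsSelfAdjoint a) {r : ℝ} (hr : ∀ t ∈ spectrum ℝ a, r ≤ t) {z : ℝ} (hz : 0 ≤ z) :
    ‖NormedSpace.exp ((-z) • a)‖ ≤ Real.exp (-r * z) := by
  have hcfc : NormedSpace.exp ((-z) • a) = cfc (fun t => Real.exp ((-z) • t)) a := by
    rw [← CFC.real_exp_eq_normedSpace_exp ((IsSelfAdjoint.all (-z)).smul ha),
      cfc_comp_smul (-z) Real.exp a]
  rw [hcfc]
  refine norm_cfc_le (Real.exp_pos _).le fun t ht => ?_
  rw [Real.norm_of_nonneg (Real.exp_pos _).le, Real.exp_le_exp, smul_eq_mul]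
  nlinarith [hr t ht]

theorem IsStrictlyPositive.exists_pos_isBigO_exp_neg_smul {A : Type*} [CStarAlgebra A]
    [PartialOrder A] [StarOrderedRing A] {a : A} (ha : IsStrictlyPositive a) :
    ∃ r > 0, (fun z : ℝ => exp ((-z) • a)) =O[atTop] fun z => Real.exp (-r * z) := by
  obtain ⟨r, hr, hspec⟩ := ha.exists_pos_le_of_mem_spectrum
  refine ⟨r, hr, IsBigO.of_bound 1 ?_⟩
  filter_upwards [eventually_ge_atTop 0] with z hz
  rw [one_mul, Real.norm_of_nonneg (Real.exp_pos _).le]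
  exact IsSelfAdjoint.norm_exp_neg_smul_le ha.isSelfAdjoint hspec hz

theorem hasDerivAt_exp_neg_smul_apply {E : Type*} [NormedAddCommGroup E] [NormedSpace ℂ E]
    [CompleteSpace E] (S : E →L[ℂ] E) (x : E) (z : ℝ) :
    HasDerivAt (fun t : ℝ => exp ((-t) • S) x) (-S (exp ((-z) • S) x)) z := by
  have h : HasDerivAt (fun t : ℝ => exp ((-t) • S)) (-S * exp ((-z) • S)) z := by
    simpa only [smul_neg, neg_smul] using hasDerivAt_exp_smul_const' (𝕂 := ℝ) (-S) z
  exact ((ContinuousLinearMap.apply ℂ E x).restrictScalars ℝ).hasFDerivAt.comp_hasDerivAt z h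

theorem IsSelfAdjoint.hasDerivAt_inner_of_hasDerivAt_neg {𝕜 E : Type*} [RCLike 𝕜]
    [NormedAddCommGroup E] [InnerProductSpace 𝕜 E] [CompleteSpace E] [NormedSpace ℝ E]
    {S : E →L[𝕜] E} (hS : IsSelfAdjoint S) {u v : ℝ → E} {z : ℝ} (hu : HasDerivAt u (-S (u z)) z)
    (hv : HasDerivAt v (-S (v z)) z) :
    HasDerivAt (fun t => ⟪u t, v t⟫_𝕜) (-2 * ⟪S (u z), v z⟫_𝕜) z := by
  refine (hu.inner 𝕜 hv).congr_deriv ?_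
  have hsymm : ⟪S (u z), v z⟫_𝕜 = ⟪u z, S (v z)⟫_𝕜 := hS.isSymmetric (u z) (v z)
  rw [inner_neg_left, inner_neg_right, ← hsymm]
  ring

theorem integral_Ioi_min_smul_eq_sub {E : Type*} [NormedAddCommGroup E] [NormedSpace ℝ E]
    [CompleteSpace E] {φ ψ g : ℝ → E} (hφ : ∀ z ∈ Ici (0 : ℝ), HasDerivAt φ (ψ z) z)
    (hψ : ∀ z ∈ Ici (0 : ℝ), HasDerivAt ψ (g z) z) (hg : IntegrableOn g (Ioi 0))
    (hψ_lim : Tendsto ψ atTop (𝓝 0)) {y : ℝ} (hy : 0 ≤ y) :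
    ∫ z in Ioi 0, min y z • g z = φ 0 - φ y := by
  have hint : IntegrableOn (fun z => min y z • g z) (Ioi 0) := by
    refine hg.bdd_smul y (by fun_prop) (ae_restrict_of_forall_mem measurableSet_Ioi fun z hz => ?_)
    rw [Real.norm_of_nonneg (le_min hy (mem_Ioi.1 hz).le)]
    exact min_le_left y z
  have hint_near : IntegrableOn (fun z => z • g z) (Ioc 0 y) :=
    (hint.mono_set Ioc_subset_Ioi_self).congr_fun (fun z hz => by simp only [min_eq_right hz.2])
      measurableSet_Ioc
  have h_near : ∫ z in (0)..y, z • g z = (y • ψ y - φ y) - ((0 : ℝ) • ψ 0 - φ 0) := by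
    refine intervalIntegral.integral_eq_sub_of_hasDerivAt (f := fun z => z • ψ z - φ z)
      (fun z hz => ?_)
      ((intervalIntegrable_iff_integrableOn_Ioc_of_le hy).2 hint_near)
    rw [uIcc_of_le hy] at hz
    exact (((hasDerivAt_id' z).smul (hψ z hz.1)).sub (hφ z hz.1)).congr_deriv (by simp)
  have h_far : ∫ z in Ioi y, g z = 0 - ψ y :=
    integral_Ioi_of_hasDerivAt_of_tendsto' (fun z hz => hψ z (hy.trans hz))
      (hg.mono_set (Ioi_subset_Ioi hy)) hψ_lim
  calc ∫ z in Ioi 0, min y z • g z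
      = (∫ z in Ioc 0 y, min y z • g z) + ∫ z in Ioi y, min y z • g z := by
        rw [← setIntegral_union (Ioc_disjoint_Ioi le_rfl) measurableSet_Ioi
          (hint.mono_set Ioc_subset_Ioi_self) (hint.mono_set (Ioi_subset_Ioi hy)),
          Ioc_union_Ioi_eq_Ioi hy]
    _ = (∫ z in (0)..y, z • g z) + y • ∫ z in Ioi y, g z := by
        rw [intervalIntegral.integral_of_le hy, ← integral_smul]
        congr 1
        · exact setIntegral_congr_fun measurableSet_Ioc fun z hz => by
            simp only [min_eq_right hz.2]
        · exact setIntegral_congr_fun measurableSet_Ioi fun z hz => by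
            simp only [min_eq_left (mem_Ioi.1 hz).le]
    _ = φ 0 - φ y := by
        rw [h_near, h_far]
        simp only [zero_smul, zero_sub, smul_neg]
        abel

theorem tendsto_exp_neg_mul_atTop {r : ℝ} (hr : 0 < r) :
    Tendsto (fun z => Real.exp (-r * z)) atTop (𝓝 0) :=
  Real.tendsto_exp_atBot.comp (tendsto_id.const_mul_atTop_of_neg (neg_neg_iff_pos.2 hr))

theorem integrableOn_Ioi_of_isBigO_exp_neg {E : Type*} [NormedAddCommGroup E] {f : ℝ → E}
    {a b : ℝ} (hb : 0 < b) (hf : ContinuousOn f (Ici a))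
    (ho : f =O[atTop] fun x => Real.exp (-b * x)) : IntegrableOn f (Ioi a) :=
  (integrable_norm_iff ((hf.mono Ioi_subset_Ici_self).aestronglyMeasurable measurableSet_Ioi)).1
    (integrable_of_isBigO_exp_neg hb hf.norm ho.norm_left)

section Semigroup

variable {H : Type*} [NormedAddCommGroup H] [InnerProductSpace ℂ H] [CompleteSpace H]
  {S : H →L[ℂ] H} {r : ℝ}

theorem isBigO_inner_apply_exp_neg_smul
    (hdecay : (fun z : ℝ => exp ((-z) • S)) =O[atTop] fun z => Real.exp (-r * z)) (hr : 0 ≤ r)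
    (A B : H →L[ℂ] H) (x y : H) :
    (fun z : ℝ => ⟪A (exp ((-z) • S) x), B (exp ((-z) • S) y)⟫_ℂ) =O[atTop]
      fun z => Real.exp (-r * z) := by
  have hA := ((A.comp (ContinuousLinearMap.apply ℂ H x)).isBigO_comp _ atTop).trans hdecay
  have hB := ((B.comp (ContinuousLinearMap.apply ℂ H y)).isBigO_comp _ atTop).trans hdecay
  have hexp_sq : (fun z : ℝ => Real.exp (-r * z) * Real.exp (-r * z)) =O[atTop]
      fun z => Real.exp (-r * z) := by
    refine IsBigO.of_bound 1 ?_
    filter_upwards [eventually_ge_atTop 0] with z hz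
    rw [one_mul, norm_mul, Real.norm_of_nonneg (Real.exp_pos _).le]
    exact mul_le_of_le_one_left (Real.exp_pos _).le
      (Real.exp_le_one_iff.2 (by nlinarith))
  exact isBoundedBilinearMap_inner.isBigO_comp.trans
    ((hA.norm_left.mul hB.norm_left).trans hexp_sq)

theorem four_mul_integral_min_mul_inner_exp_neg_smul (hS : IsSelfAdjoint S)
    (hdecay : (fun z : ℝ => exp ((-z) • S)) =O[atTop] fun z => Real.exp (-r * z)) (hr : 0 < r)
    (ω η : H) {y : ℝ} (hy : 0 ≤ y) :
    4 * ∫ z in Ioi (0 : ℝ), ((min y z : ℝ) : ℂ) * ⟪S (exp ((-z) • S) ω), S (exp ((-z) • S) η)⟫_ℂ =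
      ⟪ω, η⟫_ℂ - ⟪exp ((-y) • S) ω, exp ((-y) • S) η⟫_ℂ := by
  set u : ℝ → H := fun z => exp ((-z) • S) ω
  set v : ℝ → H := fun z => exp ((-z) • S) η
  have hu (z : ℝ) : HasDerivAt u (-S (u z)) z := hasDerivAt_exp_neg_smul_apply S ω z
  have hv (z : ℝ) : HasDerivAt v (-S (v z)) z := hasDerivAt_exp_neg_smul_apply S η z
  have hSu (z : ℝ) : HasDerivAt (fun t => S (u t)) (-S (S (u z))) z :=
    ((S.restrictScalars ℝ).hasFDerivAt.comp_hasDerivAt z (hu z)).congr_deriv (by simp)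
  have hψ (z : ℝ) :
      HasDerivAt (fun t => -2 * ⟪S (u t), v t⟫_ℂ) (4 * ⟪S (u z), S (v z)⟫_ℂ) z := by
    refine ((hS.hasDerivAt_inner_of_hasDerivAt_neg (hSu z) (hv z)).const_mul (-2)).congr_deriv ?_
    have hsymm : ⟪S (S (u z)), v z⟫_ℂ = ⟪S (u z), S (v z)⟫_ℂ := hS.isSymmetric _ _
    rw [hsymm]
    ring
  have hψ_lim : Tendsto (fun t => -2 * ⟪S (u t), v t⟫_ℂ) atTop (𝓝 0) := by
    simpa [u, v] using ((isBigO_inner_apply_exp_neg_smul hdecay hr.le S 1 ω η).trans_tendsto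
      (tendsto_exp_neg_mul_atTop hr)).const_mul (-2)
  have hint : IntegrableOn (fun z => 4 * ⟪S (u z), S (v z)⟫_ℂ) (Ioi 0) := by
    have hu_cont : Continuous u := continuous_iff_continuousAt.2 fun z => (hu z).continuousAt
    have hv_cont : Continuous v := continuous_iff_continuousAt.2 fun z => (hv z).continuousAt
    exact (integrableOn_Ioi_of_isBigO_exp_neg hr
      ((S.continuous.comp hu_cont).inner (S.continuous.comp hv_cont)).continuousOn
      (isBigO_inner_apply_exp_neg_smul hdecay hr.le S S ω η)).const_mul 4
  rw [← integral_const_mul]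
  convert integral_Ioi_min_smul_eq_sub
    (fun z _ => hS.hasDerivAt_inner_of_hasDerivAt_neg (hu z) (hv z)) (fun z _ => hψ z) hint
    hψ_lim hy using 1
  · simp only [Complex.real_smul]
    congr 1
    ext z
    ring
  · simp [u, v]

end Semigroup

/-- Polarized truncated Littlewood–Paley identity: for a positive invertible bounded self-adjoint
operator `S` on a complex Hilbert space and any `ω, η`,
`lim_{y → ∞} 4 ∫₀^∞ min(y,z) ⟨S e^{-zS} ω, S e^{-zS} η⟩ dz = ⟨ω, η⟩`. -/
theorem littlewood_paley_truncated_polarized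
    {H : Type*} [NormedAddCommGroup H] [InnerProductSpace ℂ H] [CompleteSpace H]
    (S : H →L[ℂ] H) (hS : 0 ≤ S) (hS' : IsUnit S) (ω η : H) :
    Filter.Tendsto
      (fun y : ℝ => 4 * ∫ z in Set.Ioi (0 : ℝ),
        ((min y z : ℝ) : ℂ) *
          inner ℂ (S (NormedSpace.exp ((-z) • S) ω)) (S (NormedSpace.exp ((-z) • S) η)))
      Filter.atTop (nhds (inner ℂ ω η : ℂ)) := by
  obtain ⟨r, hr, hdecay⟩ :=
    (IsStrictlyPositive.iff_of_unital.2 ⟨hS, hS'⟩).exists_pos_isBigO_exp_neg_smul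
  have hSa : IsSelfAdjoint S := .of_nonneg hS
  have hφ_lim : Tendsto (fun y : ℝ => ⟪exp ((-y) • S) ω, exp ((-y) • S) η⟫_ℂ) atTop (𝓝 0) := by
    simpa using (isBigO_inner_apply_exp_neg_smul hdecay hr.le 1 1 ω η).trans_tendsto
      (tendsto_exp_neg_mul_atTop hr)
  have hlim : Tendsto (fun y : ℝ => ⟪ω, η⟫_ℂ - ⟪exp ((-y) • S) ω, exp ((-y) • S) η⟫_ℂ) atTop
      (𝓝 ⟪ω, η⟫_ℂ) := by
    simpa using tendsto_const_nhds.sub hφ_lim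
  refine hlim.congr' ?_
  filter_upwards [eventually_ge_atTop 0] with y hy
  exact (four_mul_integral_min_mul_inner_exp_neg_smul hSa hdecay hr ω η hy).symm
end
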